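/- arXiv:1109.2020 — 7 statements merged into one kernel-verified Lean document; each statement's English description precedes it below -/
import Mathlib

section
/- Let $G$ be a group and $n$ a natural number. If the $n$-th term $Z_n(G)$ of the upper central series of $G$ has finite index in $G$, then the subgroup $\gamma_{n+1}(G)$ (the $n$-th term of Mathlib's lower central series, `lowerCentralSeries G n`, with `lowerCentralSeries G 0 = ⊤`) is finite. -/
/-!
Induction on `n`. The induction hypothesis applied to `G ⧸ Z(G)` says that `F = γ_{n+1}(G)` is
finite modulo `Z(G)`, so `⁅F, F⁆` is finite by Schur's theorem. By the three subgroups lemma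
`⁅F, Z_{n+1}(G)⁆ = 1`, so a commutator `⁅x, g⁆` with `x ∈ F` only depends on `x` modulo `Z(G)` and
on `g` modulo `Z_{n+1}(G)`: there are finitely many of them. Modulo `⁅F, F⁆` they commute, and
`x ↦ ⁅x, g⁆` is a homomorphism on `F`, so their orders divide `[F : F ∩ Z(G)]`. Hence they generate
a finite group, and `γ_{n+2}(G) = ⁅F, G⁆` is finite.
-/

open commutatorElement

section

variable {G : Type*} [Group G]

theorem commutatorElement_mul_left_of_commute {x y z : G} (h : Commute z y) :
    ⁅x * z, y⁆ = ⁅x, y⁆ := by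
  calc ⁅x * z, y⁆ = x * (z * y) * z⁻¹ * x⁻¹ * y⁻¹ := by group
    _ = x * (y * z) * z⁻¹ * x⁻¹ * y⁻¹ := by rw [h.eq]
    _ = ⁅x, y⁆ := by group

theorem commutatorElement_mul_right_of_commute {x y w : G} (h : Commute x w) :
    ⁅x, y * w⁆ = ⁅x, y⁆ := by
  calc ⁅x, y * w⁆ = x * y * (w * x⁻¹) * w⁻¹ * y⁻¹ := by group
    _ = x * y * (x⁻¹ * w) * w⁻¹ * y⁻¹ := by rw [h.inv_left.eq]
    _ = ⁅x, y⁆ := by group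

theorem Commute.commutatorElement_pow_left {x g : G} (h : Commute x ⁅x, g⁆) (k : ℕ) :
    ⁅x ^ k, g⁆ = ⁅x, g⁆ ^ k := by
  calc ⁅x ^ k, g⁆ = x ^ k * (g * x⁻¹ * g⁻¹) ^ k := by
        rw [conj_pow, commutatorElement_def, inv_pow, mul_assoc (x ^ k), mul_assoc (x ^ k)]
    _ = x ^ k * (x⁻¹ * ⁅x, g⁆) ^ k := by congr 2; group
    _ = ⁅x, g⁆ ^ k := by rw [h.inv_left.mul_pow, inv_pow, mul_inv_cancel_left]

namespace Subgroup

theorem commutator_commutator_le_of_rotate {H₁ H₂ H₃ N : Subgroup G} [N.Normal]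
    (h1 : ⁅⁅H₂, H₃⁆, H₁⁆ ≤ N) (h2 : ⁅⁅H₃, H₁⁆, H₂⁆ ≤ N) : ⁅⁅H₁, H₂⁆, H₃⁆ ≤ N := by
  simp_rw [← QuotientGroup.ker_mk' N, ← map_eq_bot_iff, map_commutator] at h1 h2 ⊢
  exact commutator_commutator_eq_bot_of_rotate h1 h2

-- A commutator `⁅a, b⁆` only depends on the cosets of `a` and `b` modulo these centralizers.
theorem finite_commutators_of_relIndex_centralizer_ne_zero {H K : Subgroup G}
    (hH : (centralizer K).relIndex H ≠ 0) (hK : (centralizer H).relIndex K ≠ 0) :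
    {g | ∃ a ∈ H, ∃ b ∈ K, ⁅a, b⁆ = g}.Finite := by
  have : ((centralizer K).subgroupOf H).FiniteIndex := ⟨hH⟩
  have : ((centralizer H).subgroupOf K).FiniteIndex := ⟨hK⟩
  refine (Set.finite_range fun p : (H ⧸ (centralizer K).subgroupOf H) ×
      (K ⧸ (centralizer H).subgroupOf K) => ⁅(p.1.out : G), (p.2.out : G)⁆).subset ?_
  rintro _ ⟨a, ha, b, hb, rfl⟩
  obtain ⟨c, hc⟩ := QuotientGroup.mk_out_eq_mul ((centralizer K).subgroupOf H) ⟨a, ha⟩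
  obtain ⟨d, hd⟩ := QuotientGroup.mk_out_eq_mul ((centralizer H).subgroupOf K) ⟨b, hb⟩
  refine ⟨(QuotientGroup.mk ⟨a, ha⟩, QuotientGroup.mk ⟨b, hb⟩), ?_⟩
  simp only [hc, hd, coe_mul]
  rw [commutatorElement_mul_right_of_commute, commutatorElement_mul_left_of_commute]
  · exact (mem_centralizer_iff.mp (mem_subgroupOf.mp c.2) b hb).symm
  · exact mem_centralizer_iff.mp (mem_subgroupOf.mp d.2) _ (H.mul_mem ha c.1.2)

theorem finite_closure_of_commute_of_isOfFinOrder {S : Set G} (hS : S.Finite)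
    (hcomm : ∀ x ∈ S, ∀ y ∈ S, Commute x y) (htors : ∀ x ∈ S, IsOfFinOrder x) :
    Finite (closure S) := by
  have := isMulCommutative_closure hcomm
  have : Group.FG (closure S) := (Group.fg_iff_subgroup_fg _).mpr ((fg_iff _).mpr ⟨S, rfl, hS⟩)
  open scoped IsMulCommutative in
  refine CommGroup.finite_of_fg_isMulTorsion _ fun x => ?_
  have hle : closure (((↑) : closure S → G) ⁻¹' S) ≤ CommGroup.torsion (closure S) :=
    (closure_le _).mpr fun y hy => (subtype_injective _).isOfFinOrder_iff.mp (htors _ hy)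
  exact hle (closure_closure_coe_preimage (k := S) ▸ mem_top x)

theorem finite_of_finite_map_mk' {N K : Subgroup G} [N.Normal] [Finite N]
    (h : Finite (K.map (QuotientGroup.mk' N))) : Finite K := by
  rw [((QuotientGroup.mk' N).comp K.subtype).finite_iff_finite_ker_range, MonoidHom.range_comp,
    range_subtype, ← MonoidHom.comap_ker, QuotientGroup.ker_mk']
  refine ⟨Finite.of_injective (fun x : N.comap K.subtype => (⟨x.1, x.2⟩ : N)) ?_, h⟩
  intro x y hxy
  ext
  exact congrArg ((↑) : N → G) hxy

theorem commutator_lowerCentralSeries_upperCentralSeries_le (i j : ℕ) :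
    ⁅lowerCentralSeries (⊤ : Subgroup G) i, upperCentralSeries G (i + j + 1)⁆ ≤
      upperCentralSeries G j := by
  induction i generalizing j with
  | zero => rw [commutator_comm, zero_add]; exact commutator_upperCentralSeries_top_le G j
  | succ i ih =>
    apply commutator_commutator_le_of_rotate
    · rw [commutator_comm _ (lowerCentralSeries ⊤ i), commutator_comm ⊤,
        show i + 1 + j + 1 = i + j + 1 + 1 by omega]
      exact (commutator_mono le_rfl (commutator_upperCentralSeries_top_le G _)).trans (ih j)
    · rw [commutator_comm (upperCentralSeries G _), show i + 1 + j + 1 = i + (j + 1) + 1 by omega]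
      exact (commutator_mono (ih (j + 1)) le_rfl).trans (commutator_upperCentralSeries_top_le G j)

theorem upperCentralSeries_succ_le_centralizer (n : ℕ) :
    upperCentralSeries G (n + 1) ≤ centralizer (lowerCentralSeries (⊤ : Subgroup G) n) := by
  rw [← commutator_eq_bot_iff_le_centralizer, commutator_comm, ← le_bot_iff]
  exact commutator_lowerCentralSeries_upperCentralSeries_le n 0

theorem index_upperCentralSeries_quotient_center (n : ℕ) :
    (upperCentralSeries (G ⧸ center G) n).index = (upperCentralSeries G (n + 1)).index := by
  rw [← index_comap_of_surjective _ (QuotientGroup.mk'_surjective (center G)),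
    comap_upperCentralSeries_quotient_center]

theorem relIndex_center_lowerCentralSeries (n : ℕ) :
    (center G).relIndex (lowerCentralSeries ⊤ n) =
      Nat.card (lowerCentralSeries (⊤ : Subgroup (G ⧸ center G)) n) := by
  rw [← map_top_of_surjective _ (QuotientGroup.mk'_surjective (center G)),
    ← map_lowerCentralSeries, ← relIndex_ker, QuotientGroup.ker_mk']

theorem finite_commutator_of_relIndex_center_ne_zero {F : Subgroup G}
    (hZ : (center G).relIndex F ≠ 0) : Finite (⁅F, F⁆ : Subgroup G) := by
  have hcenter : (centralizer ((⊤ : Subgroup F) : Set F)).relIndex ⊤ ≠ 0 := by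
    rw [relIndex_top_right, coe_top, centralizer_univ]
    refine ne_zero_of_dvd_ne_zero hZ (index_dvd_of_le fun x hx => ?_)
    exact mem_center_iff.mpr fun y => Subtype.ext (mem_center_iff.mp (mem_subgroupOf.mp hx) y)
  have : Finite (commutatorSet F) := by
    have := (finite_commutators_of_relIndex_centralizer_ne_zero hcenter hcenter).to_subtype
    simpa [commutatorSet_def] using this
  have hmap : (_root_.commutator F).map F.subtype = ⁅F, F⁆ := by
    rw [_root_.commutator_def, map_commutator, ← MonoidHom.range_eq_map, range_subtype]
  exact hmap ▸ Finite.of_equiv _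
    ((_root_.commutator F).equivMapOfInjective _ F.subtype_injective).toEquiv

theorem finite_commutator_top_of_relIndex_center_ne_zero {F : Subgroup G} [F.Normal]
    (hZ : (center G).relIndex F ≠ 0) (hC : (centralizer (F : Set G)).FiniteIndex) :
    Finite (⁅F, ⊤⁆ : Subgroup G) := by
  have : Finite (⁅F, F⁆ : Subgroup G) := finite_commutator_of_relIndex_center_ne_zero hZ
  set π := QuotientGroup.mk' ⁅F, F⁆
  set S := {g | ∃ a ∈ F, ∃ b ∈ (⊤ : Subgroup G), ⁅a, b⁆ = g}
  have hS : S.Finite := finite_commutators_of_relIndex_centralizer_ne_zero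
    (by rwa [coe_top, centralizer_univ]) (by rw [relIndex_top_right]; exact hC.index_ne_zero)
  have hSF : S ⊆ F := by
    rintro _ ⟨a, ha, b, hb, rfl⟩
    exact commutator_le_left F ⊤ (commutator_mem_commutator ha hb)
  have hcomm : ∀ x ∈ F.map π, ∀ y ∈ F.map π, Commute x y := by
    have : F.map π ≤ centralizer (F.map π) := by
      rw [← commutator_eq_bot_iff_le_centralizer, ← map_commutator, map_eq_bot_iff,
        QuotientGroup.ker_mk']
    exact fun x hx y hy => mem_centralizer_iff.mp (this hy) x hx
  have htors : ∀ s ∈ S, IsOfFinOrder (π s) := by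
    rintro _ ⟨a, ha, b, -, rfl⟩
    have hcentral : Commute (a ^ (center G).relIndex F) b :=
      (mem_center_iff.mp (pow_relIndex_mem _ ha) b).symm
    have ha' : Commute (π a) ⁅π a, π b⁆ := hcomm _ (mem_map_of_mem _ ha) _
      (map_commutatorElement π a b ▸ mem_map_of_mem _ (hSF ⟨a, ha, b, mem_top b, rfl⟩))
    refine isOfFinOrder_iff_pow_eq_one.mpr ⟨_, Nat.pos_of_ne_zero hZ, ?_⟩
    rw [map_commutatorElement, ← ha'.commutatorElement_pow_left, ← map_pow,
      ← map_commutatorElement, hcentral.commutator_eq, map_one]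
  refine finite_of_finite_map_mk' (N := ⁅F, F⁆) ?_
  rw [commutator_def F ⊤, MonoidHom.map_closure]
  refine finite_closure_of_commute_of_isOfFinOrder (hS.image π) ?_ ?_
  · rintro _ ⟨x, hx, rfl⟩ _ ⟨y, hy, rfl⟩
    exact hcomm _ (mem_map_of_mem _ (hSF hx)) _ (mem_map_of_mem _ (hSF hy))
  · rintro _ ⟨x, hx, rfl⟩
    exact htors x hx

end Subgroup

end

/-- Baer's theorem: if the `n`-th term of the upper central series of a group `G`
has finite index in `G`, then `lowerCentralSeries G n` (i.e. `γ_{n+1}(G)`) is finite. -/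
theorem baer_finite_lowerCentralSeries (G : Type*) [Group G] (n : ℕ)
    (h : (Subgroup.upperCentralSeries G n).FiniteIndex) :
    Finite (Subgroup.lowerCentralSeries (⊤ : Subgroup G) n) := by
  induction n generalizing G with
  | zero =>
    have : Finite G := (Subgroup.finite_iff_finite_and_finiteIndex ⊥).mpr ⟨inferInstance, h⟩
    infer_instance
  | succ n ih =>
    have hZ : (Subgroup.center G).relIndex (Subgroup.lowerCentralSeries ⊤ n) ≠ 0 := by
      have := ih (G ⧸ Subgroup.center G)
        ⟨by rw [Subgroup.index_upperCentralSeries_quotient_center]; exact h.index_ne_zero⟩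
      rw [Subgroup.relIndex_center_lowerCentralSeries]
      exact Nat.card_pos.ne'
    exact Subgroup.finite_commutator_top_of_relIndex_center_ne_zero hZ
      (Subgroup.finiteIndex_of_le (Subgroup.upperCentralSeries_succ_le_centralizer n))
end

section
/- Let $G$ be a group. If $N$ is a finite normal subgroup of $G$ such that the quotient $G/N$ is nilpotent, then some term of the upper central series of $G$ has finite index in $G$, i.e. there exists a natural number $n$ such that `upperCentralSeries G n` has finite index in $G$. -/
/-!
Modulo the finite normal subgroup `N`, the group is nilpotent, so some term `γ_c` of the lower
central series lies in `N` and is finite; it then suffices to prove P. Hall's theorem that a finite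
`γ_{c+1}` forces some `Z_n` to have finite index. By induction on `c` this reduces to showing that
`Z_{c+3} ∩ γ_c` has finite index in `γ_c`, since then `γ_c` becomes finite in `G ⧸ Z_{c+3}`.

Let `C` be the centralizer of the finite normal subgroup `γ_{c+1}`; it has finite index. On
`L = γ_c ∩ C`, commutation with a fixed `t` is a homomorphism `m ↦ ⁅t, m⁆` into `γ_{c+1}`, so its
kernel, the centralizer of `t` in `L`, has finite index. Intersecting over a transversal of `C`
gives a finite-index subgroup of `L` commuting with the transversal; since the three subgroups
lemma gives `⁅L, C⁆ ≤ Z_{c+2}`, this subgroup lies in `Z_{c+3}`.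
-/

open scoped commutatorElement

namespace Subgroup

variable {G : Type*} [Group G]

theorem commutator_commutator_le_sup (H₁ H₂ H₃ : Subgroup G) [H₁.Normal] [H₂.Normal] [H₃.Normal] :
    ⁅⁅H₁, H₂⁆, H₃⁆ ≤ ⁅⁅H₂, H₃⁆, H₁⁆ ⊔ ⁅⁅H₃, H₁⁆, H₂⁆ := by
  set Q := ⁅⁅H₂, H₃⁆, H₁⁆ ⊔ ⁅⁅H₃, H₁⁆, H₂⁆
  have le_Q_iff : ∀ A B C : Subgroup G, ⁅⁅A, B⁆, C⁆ ≤ Q ↔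
      ⁅⁅A.map (QuotientGroup.mk' Q), B.map (QuotientGroup.mk' Q)⁆,
        C.map (QuotientGroup.mk' Q)⁆ = ⊥ := by
    simp only [← map_commutator, map_eq_bot_iff, QuotientGroup.ker_mk', implies_true]
  rw [le_Q_iff]
  exact commutator_commutator_eq_bot_of_rotate ((le_Q_iff _ _ _).mp le_sup_left)
    ((le_Q_iff _ _ _).mp le_sup_right)

theorem le_upperCentralSeries_succ_iff {H : Subgroup G} {n : ℕ} :
    H ≤ upperCentralSeries G (n + 1) ↔ ⁅H, ⊤⁆ ≤ upperCentralSeries G n := by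
  rw [commutator_le]
  simp [SetLike.le_def, mem_upperCentralSeries_succ_iff]

theorem commutator_le_upperCentralSeries {Y : ℕ → Subgroup G} [∀ k, (Y k).Normal] {m : ℕ}
    (hY : ∀ k, ⁅Y k, ⊤⁆ ≤ Y (k + 1)) (hm : ∀ j k, m ≤ j + k → ⁅Y j, Y k⁆ = ⊥) (n : ℕ) :
    ∀ j k, m ≤ j + k + n → ⁅Y j, Y k⁆ ≤ upperCentralSeries G n := by
  induction n with
  | zero => exact fun j k h ↦ (hm j k h).le
  | succ n ih =>
    intro j k h
    rw [le_upperCentralSeries_succ_iff]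
    refine (commutator_commutator_le_sup _ _ _).trans (sup_le ?_ ?_)
    · exact (commutator_mono (hY k) le_rfl).trans (ih _ _ (by omega))
    · rw [commutator_comm ⊤]
      exact (commutator_mono (hY j) le_rfl).trans (ih _ _ (by omega))

theorem mem_upperCentralSeries_succ_of_commute_out {C : Subgroup G} {n : ℕ} {x : G}
    (hC : ∀ c ∈ C, ⁅x, c⁆ ∈ upperCentralSeries G n) (hx : ∀ q : G ⧸ C, Commute x q.out) :
    x ∈ upperCentralSeries G (n + 1) := by
  rw [mem_upperCentralSeries_succ_iff]
  intro y
  obtain ⟨c, hc⟩ := QuotientGroup.mk_out_eq_mul C y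
  set t := (y : G ⧸ C).out
  have hy : y = t * (c : G)⁻¹ := by rw [hc]; group
  have hxt : x * t = t * x := hx y
  have : ⁅x, y⁆ = t * ⁅x, (c : G)⁻¹⁆ * t⁻¹ := by
    rw [hy, commutatorElement_def, commutatorElement_def,
      show x * (t * (c : G)⁻¹) = (x * t) * (c : G)⁻¹ by group, hxt]
    group
  rw [this]
  exact (inferInstance : (upperCentralSeries G n).Normal).conj_mem _ (hC _ (inv_mem c.2)) t

theorem finiteIndex_centralizer (K : Subgroup G) [K.Normal] [Finite K] :
    (centralizer (K : Set G)).FiniteIndex := by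
  refine finiteIndex_of_le (H := (MulAut.conjNormal (H := K)).ker) fun x hx k hk ↦ ?_
  have := congr_arg Subtype.val (DFunLike.congr_fun hx ⟨k, hk⟩)
  rw [MulAut.conjNormal_apply] at this
  simpa [eq_mul_inv_iff_mul_eq] using this.symm

theorem relIndex_centralizer_singleton_ne_zero {K L : Subgroup G} [Finite K]
    (hL : L ≤ centralizer K) {t : G} (ht : ∀ m ∈ L, ⁅t, m⁆ ∈ K) :
    (centralizer {t}).relIndex L ≠ 0 := by
  let f : L →* G :=
    { toFun m := ⁅t, (m : G)⁆
      map_one' := by simp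
      map_mul' m m' := by
        have hm : ⁅t, (m' : G)⁆ * m = m * ⁅t, (m' : G)⁆ :=
          mem_centralizer_iff.mp (hL m.2) _ (ht _ m'.2)
        calc ⁅t, (m : G) * m'⁆ = ⁅t, (m : G)⁆ * ((m * ⁅t, (m' : G)⁆) * (m : G)⁻¹) := by
              simp only [commutatorElement_def]; group
          _ = ⁅t, (m : G)⁆ * ⁅t, (m' : G)⁆ := by rw [← hm]; group }
  have : Finite f.range := Finite.Set.subset (K : Set G) (by rintro _ ⟨m, rfl⟩; exact ht m m.2)
  have hker : f.ker = (centralizer {t}).subgroupOf L := by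
    ext m
    simp [f, mem_subgroupOf, mem_centralizer_singleton_iff,
      commutatorElement_eq_one_iff_mul_comm, eq_comm]
  rw [relIndex, ← hker]
  exact (finiteIndex_ker f).index_ne_zero

theorem commutator_lowerCentralSeries_inf_centralizer_le (c : ℕ) :
    ⁅(⊤ : Subgroup G).lowerCentralSeries c ⊓
        centralizer ((⊤ : Subgroup G).lowerCentralSeries (c + 1)),
      centralizer ((⊤ : Subgroup G).lowerCentralSeries (c + 1))⁆ ≤
      upperCentralSeries G (c + 2) := by
  set C := centralizer ((⊤ : Subgroup G).lowerCentralSeries (c + 1) : Set G)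
  let Y (j : ℕ) : Subgroup G := (⊤ : Subgroup G).lowerCentralSeries j ⊓ C
  have hY : ∀ k, ⁅Y k, ⊤⁆ ≤ Y (k + 1) := fun k ↦
    le_inf (commutator_mono inf_le_left le_rfl) ((commutator_le_left _ _).trans inf_le_right)
  have hYK : ∀ j, c + 1 ≤ j → ∀ k, ⁅Y j, Y k⁆ = ⊥ := fun j hj k ↦ by
    rw [commutator_comm, commutator_eq_bot_iff_le_centralizer]
    exact inf_le_right.trans <| centralizer_le <|
      inf_le_left.trans (lowerCentralSeries_antitone ⊤ hj)
  have hm : ∀ j k, 2 * c + 2 ≤ j + k → ⁅Y j, Y k⁆ = ⊥ := fun j k h ↦ by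
    rcases le_or_gt (c + 1) j with hj | hj
    · exact hYK j hj k
    · rw [commutator_comm]; exact hYK k (by omega) j
  simpa [Y] using commutator_le_upperCentralSeries hY hm (c + 2) c 0 (by omega)

theorem relIndex_upperCentralSeries_lowerCentralSeries_ne_zero (c : ℕ)
    [Finite ((⊤ : Subgroup G).lowerCentralSeries (c + 1))] :
    (upperCentralSeries G (c + 3)).relIndex ((⊤ : Subgroup G).lowerCentralSeries c) ≠ 0 := by
  set K := (⊤ : Subgroup G).lowerCentralSeries (c + 1)
  set M := (⊤ : Subgroup G).lowerCentralSeries c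
  set C := centralizer (K : Set G)
  have := finiteIndex_centralizer K
  set I := ⨅ q : G ⧸ C, centralizer {q.out}
  have hI : I.relIndex (M ⊓ C) ≠ 0 :=
    relIndex_iInf_ne_zero fun q ↦ relIndex_centralizer_singleton_ne_zero inf_le_right
      fun m hm ↦ commutatorElement_inv m q.out ▸
        inv_mem (commutator_mem_commutator hm.1 (mem_top _))
  have hIZ : I ⊓ (M ⊓ C) ≤ upperCentralSeries G (c + 3) := fun x hx ↦
    mem_upperCentralSeries_succ_of_commute_out
      (fun y hy ↦ commutator_lowerCentralSeries_inf_centralizer_le c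
        (commutator_mem_commutator hx.2 hy))
      (fun q ↦ mem_centralizer_singleton_iff.mp (mem_iInf.mp hx.1 q))
  have hZ : (upperCentralSeries G (c + 3)).relIndex (M ⊓ C) ≠ 0 :=
    mt (relIndex_eq_zero_of_le_left hIZ) (by rwa [inf_relIndex_right])
  have hC : (M ⊓ C).relIndex M ≠ 0 := by
    rw [inf_relIndex_left]
    exact (isFiniteRelIndex_of_finiteIndex (H := C)).relIndex_ne_zero
  exact relIndex_ne_zero_trans hZ hC

theorem finite_lowerCentralSeries_quotient_upperCentralSeries (c : ℕ)
    [Finite ((⊤ : Subgroup G).lowerCentralSeries (c + 1))] :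
    Finite ((⊤ : Subgroup (G ⧸ upperCentralSeries G (c + 3))).lowerCentralSeries c) := by
  rw [← map_top_of_surjective _ (QuotientGroup.mk'_surjective _), ← map_lowerCentralSeries]
  apply Nat.finite_of_card_ne_zero
  rw [← relIndex_ker, QuotientGroup.ker_mk']
  exact relIndex_upperCentralSeries_lowerCentralSeries_ne_zero c

theorem comap_upperCentralSeries_quotient_upperCentralSeries_le (r j : ℕ) :
    (upperCentralSeries (G ⧸ upperCentralSeries G r) j).comap (QuotientGroup.mk' _) ≤
      upperCentralSeries G (j + r) := by
  induction j with
  | zero => simp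
  | succ j ih =>
    intro x hx
    rw [Nat.add_right_comm, mem_upperCentralSeries_succ_iff]
    exact fun y ↦ ih (mem_upperCentralSeries_succ_iff.mp hx y)

theorem exists_finiteIndex_upperCentralSeries_of_finite_lowerCentralSeries (c : ℕ)
    [Finite ((⊤ : Subgroup G).lowerCentralSeries c)] :
    ∃ n, (upperCentralSeries G n).FiniteIndex := by
  induction c generalizing G with
  | zero =>
    have : Finite G := Finite.of_equiv ((⊤ : Subgroup G).lowerCentralSeries 0) topEquiv.toEquiv
    exact ⟨0, inferInstance⟩
  | succ c ih =>
    have := finite_lowerCentralSeries_quotient_upperCentralSeries (G := G) c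
    obtain ⟨n, hn⟩ := ih (G := G ⧸ upperCentralSeries G (c + 3))
    have : ((upperCentralSeries _ n).comap
        (QuotientGroup.mk' (upperCentralSeries G (c + 3)))).FiniteIndex :=
      ⟨by rw [index_comap_of_surjective _ (QuotientGroup.mk'_surjective _)]; exact hn.index_ne_zero⟩
    exact ⟨_, finiteIndex_of_le (comap_upperCentralSeries_quotient_upperCentralSeries_le (c + 3) n)⟩

end Subgroup

/-- If `N` is a finite normal subgroup of `G` with `G ⧸ N` nilpotent, then some
term of the upper central series of `G` has finite index in `G`. -/
theorem upperCentralSeries_finiteIndex_of_finite_normal_nilpotent_quotient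
    (G : Type*) [Group G] (N : Subgroup G) [N.Normal] [Finite N]
    (h : Group.IsNilpotent (G ⧸ N)) :
    ∃ n : ℕ, (upperCentralSeries G n).FiniteIndex := by
  obtain ⟨c, hc⟩ := Subgroup.nilpotent_iff_lowerCentralSeries.mp h
  have hcN : (⊤ : Subgroup G).lowerCentralSeries c ≤ N := by
    rw [← QuotientGroup.ker_mk' N, ← Subgroup.map_eq_bot_iff, Subgroup.map_lowerCentralSeries,
      Subgroup.map_top_of_surjective _ (QuotientGroup.mk'_surjective N), hc]
  have : Finite ((⊤ : Subgroup G).lowerCentralSeries c) := Finite.Set.subset (N : Set G) hcN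
  exact Subgroup.exists_finiteIndex_upperCentralSeries_of_finite_lowerCentralSeries c
end

section
/- Let $G$ be a finitely generated group such that for every normal subgroup $K$ of $G$ with $K \neq G$, the center of the quotient group $G/K$ is nontrivial. Then $G$ is nilpotent. -/
/-!
By Zorn's lemma a finitely generated group that is not nilpotent has a normal subgroup `N`
maximal with `G ⧸ N` not nilpotent: the union of a chain of such subgroups is again one, because
each term of the lower central series of a finitely generated group is the normal closure of
finitely many iterated commutators of generators. Hypercentrality makes the center of `G ⧸ N`
nontrivial, so its preimage `M` strictly contains `N` and `G ⧸ M` is nilpotent, say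
`γₙ(G) ≤ M`; as `M` is central modulo `N`, then `γₙ₊₁(G) ≤ N`, a contradiction.
-/

open Subgroup
open scoped commutatorElement

namespace Subgroup

variable {G : Type*} [Group G]

theorem commutator_top_le_iff_le_upperCentralSeriesStep {H N : Subgroup G} [N.Normal] :
    ⁅H, ⊤⁆ ≤ N ↔ H ≤ N.upperCentralSeriesStep :=
  ⟨fun h _ hg y => h (commutator_mem_commutator hg (mem_top y)),
    fun h => commutator_le.2 fun _ hg y _ => h hg y⟩

instance upperCentralSeriesStep_normal (N : Subgroup G) [N.Normal] :
    (upperCentralSeriesStep N).Normal := by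
  rw [upperCentralSeriesStep_eq_comap_center]
  infer_instance

theorem lt_upperCentralSeriesStep (N : Subgroup G) [N.Normal] [Nontrivial (center (G ⧸ N))] :
    N < N.upperCentralSeriesStep := by
  conv_lhs => rw [← QuotientGroup.ker_mk' N, ← MonoidHom.comap_bot]
  rw [upperCentralSeriesStep_eq_comap_center,
    comap_lt_comap_of_surjective (QuotientGroup.mk'_surjective N), bot_lt_iff_ne_bot,
    ← nontrivial_iff_ne_bot]
  infer_instance

theorem mem_upperCentralSeriesStep_of_closure_eq_top {X : Set G} (hX : closure X = ⊤)
    {N : Subgroup G} [N.Normal] {g : G} (hg : ∀ x ∈ X, ⁅g, x⁆ ∈ N) :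
    g ∈ N.upperCentralSeriesStep := by
  have key : ∀ y, ⁅g, y⁆ ∈ N ↔ y ∈ (centralizer {(g : G ⧸ N)}).comap (QuotientGroup.mk' N) := by
    intro y
    rw [mem_comap, mem_centralizer_iff_commutator_eq_one, ← QuotientGroup.eq_one_iff,
      ← QuotientGroup.mk'_apply, map_commutatorElement]
    simp
  intro y
  rw [key]
  exact (closure_le _).2 (fun x hx => (key x).1 (hg x hx)) (hX ▸ mem_top y)

theorem commutator_normalClosure_top_le {X T : Set G} (hX : closure X = ⊤) {N : Subgroup G}
    [N.Normal] (h : ∀ t ∈ T, ∀ x ∈ X, ⁅t, x⁆ ∈ N) : ⁅normalClosure T, ⊤⁆ ≤ N :=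
  commutator_top_le_iff_le_upperCentralSeriesStep.2 <| normalClosure_le_normal fun t ht =>
    mem_upperCentralSeriesStep_of_closure_eq_top hX (h t ht)

section FG

variable [Group.FG G]

theorem exists_finite_normalClosure_eq_lowerCentralSeries (n : ℕ) :
    ∃ S : Set G, S.Finite ∧ normalClosure S = (⊤ : Subgroup G).lowerCentralSeries n := by
  obtain ⟨X, hX, hXfin⟩ := Group.fg_iff.mp ‹_›
  induction n with
  | zero => exact ⟨X, hXfin, top_unique (hX ▸ closure_le_normalClosure)⟩
  | succ n ih =>
    obtain ⟨S, hSfin, hS⟩ := ih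
    refine ⟨Set.image2 (⁅·, ·⁆) S X, hSfin.image2 _ hXfin, le_antisymm ?_ ?_⟩
    · exact normalClosure_le_normal <| Set.image2_subset_iff.2 fun s hs x _ =>
        commutator_mem_commutator (hS ▸ subset_normalClosure hs) (mem_top x)
    · rw [lowerCentralSeries_succ, ← hS]
      exact commutator_normalClosure_top_le hX fun s hs x hx =>
        subset_normalClosure (Set.mem_image2_of_mem hs hx)

theorem exists_lowerCentralSeries_le_of_isChain {c : Set (Subgroup G)}
    (hc : IsChain (· ≤ ·) c) (hne : c.Nonempty) (hnormal : ∀ N ∈ c, N.Normal) {n : ℕ}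
    (h : (⊤ : Subgroup G).lowerCentralSeries n ≤ sSup c) :
    ∃ N ∈ c, (⊤ : Subgroup G).lowerCentralSeries n ≤ N := by
  obtain ⟨S, hSfin, hS⟩ := exists_finite_normalClosure_eq_lowerCentralSeries (G := G) n
  have hSc : (hSfin.toFinset : Set G) ⊆ ⋃ N ∈ c, (N : Set G) := by
    intro s hs
    rw [Set.Finite.coe_toFinset] at hs
    obtain ⟨N, hN, hsN⟩ :=
      (mem_sSup_of_directedOn hne hc.directedOn).1 (h (hS ▸ subset_normalClosure hs))
    exact Set.mem_biUnion hN hsN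
  obtain ⟨N, hN, hSN⟩ := hc.directedOn.exists_mem_subset_of_finset_subset_biUnion hne hSc
  have := hnormal N hN
  exact ⟨N, hN, hS ▸ normalClosure_le_normal (by simpa using hSN)⟩

theorem exists_maximal_normal_forall_lowerCentralSeries_not_le (hG : ¬Group.IsNilpotent G) :
    ∃ N, Maximal (fun N : Subgroup G =>
      N.Normal ∧ ∀ n, ¬(⊤ : Subgroup G).lowerCentralSeries n ≤ N) N := by
  obtain ⟨N, -, hN⟩ := zorn_le_nonempty₀
    {N : Subgroup G | N.Normal ∧ ∀ n, ¬(⊤ : Subgroup G).lowerCentralSeries n ≤ N}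
    (fun c hcs hc N hN => ⟨sSup c, ⟨sSup_normal c fun K hK => (hcs hK).1, fun n hn => by
      obtain ⟨K, hK, hle⟩ :=
        exists_lowerCentralSeries_le_of_isChain hc ⟨N, hN⟩ (fun K hK => (hcs hK).1) hn
      exact (hcs hK).2 n hle⟩, fun _ => le_sSup⟩)
    ⊥ ⟨inferInstance, fun n hn => hG (nilpotent_iff_lowerCentralSeries.2 ⟨n, le_bot_iff.1 hn⟩)⟩
  exact ⟨N, hN⟩

end FG

end Subgroup

/-- A finitely generated hypercentral group is nilpotent, where hypercentrality
is expressed by: every proper normal subgroup gives a quotient with nontrivial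
center. -/
theorem isNilpotent_of_fg_of_hypercentral
    (G : Type*) [Group G] [Group.FG G]
    (h : ∀ (K : Subgroup G) [K.Normal], K ≠ ⊤ → Nontrivial (Subgroup.center (G ⧸ K))) :
    Group.IsNilpotent G := by
  by_contra hG
  obtain ⟨N, ⟨hN, hNγ⟩, hmax⟩ := exists_maximal_normal_forall_lowerCentralSeries_not_le hG
  have := h N fun hNtop => hNγ 0 (le_top.trans_eq hNtop.symm)
  have hlt : N < N.upperCentralSeriesStep := lt_upperCentralSeriesStep N
  obtain ⟨n, hn⟩ : ∃ n, (⊤ : Subgroup G).lowerCentralSeries n ≤ N.upperCentralSeriesStep := by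
    by_contra! hn
    exact hlt.not_ge (hmax ⟨inferInstance, hn⟩ hlt.le)
  exact hNγ (n + 1) (commutator_top_le_iff_le_upperCentralSeriesStep.2 hn)
end

section
/- Let $G$ be a group and $H$ a normal subgroup of finite index in $G$ such that for every normal subgroup $K$ of $H$ with $K \neq H$, the center of the quotient group $H/K$ is nontrivial (i.e. $H$ is hypercentral). Then every finitely generated subgroup $F$ of $G$ is nilpotent-by-finite: $F$ contains a nilpotent normal subgroup of finite index. -/
/-!
Since `H` has finite index, `F ⊓ H` has finite index in `F`, hence is finitely generated
(Schreier), and it embeds in the hypercentral group `H`. So it suffices that a finitely generated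
group `⟨X⟩` embedded in a hypercentral group `Γ` is nilpotent.

Call `w` of `X`-depth `≤ n` if `⁅⋯⁅w, x₁⁆, ⋯, xₙ⁆ = 1` for all `xᵢ ∈ X`. Every `w ∈ Γ` has finite
`X`-depth: by Zorn's lemma there is a maximal normal subgroup `M` of elements of finite depth;
an element central modulo `M` has all its commutators of finite depth, hence (`X` being finite)
has finite depth itself, so `Z(Γ/M) = 1` and `M = Γ` by hypercentrality. With `n` bounding the
depths of the generators, the normal closures of the sets of depth `≤ k`, `k ≤ n`, form an
ascending central series from `1` to `⟨X⟩`.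
-/

open Subgroup Filter
open scoped commutatorElement

namespace Group

variable {Γ : Type*} [Group Γ]

def IsHypercentral (Γ : Type*) [Group Γ] : Prop :=
  ∀ (K : Subgroup Γ) [K.Normal], K ≠ ⊤ → Nontrivial (center (Γ ⧸ K))

instance (N : Subgroup Γ) [N.Normal] : N.upperCentralSeriesStep.Normal := by
  rw [N.upperCentralSeriesStep_eq_comap_center]; infer_instance

theorem IsHypercentral.eq_top_of_upperCentralSeriesStep_le (hΓ : IsHypercentral Γ)
    (K : Subgroup Γ) [K.Normal] (hK : K.upperCentralSeriesStep ≤ K) : K = ⊤ := by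
  by_contra hne
  have := hΓ K hne
  obtain ⟨⟨z, hz⟩, hz1⟩ := exists_ne (1 : center (Γ ⧸ K))
  obtain ⟨x, rfl⟩ := QuotientGroup.mk'_surjective K z
  have hx : x ∈ K.upperCentralSeriesStep := by
    rw [K.upperCentralSeriesStep_eq_comap_center]; exact hz
  exact hz1 (Subtype.ext ((QuotientGroup.eq_one_iff x).2 (hK hx)))

theorem IsHypercentral.induction (hΓ : IsHypercentral Γ) {s : Set Γ} (h1 : 1 ∈ s)
    (hs : ∀ (K : Subgroup Γ) [K.Normal], (K : Set Γ) ⊆ s →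
      (K.upperCentralSeriesStep : Set Γ) ⊆ s)
    (g : Γ) : g ∈ s := by
  let P : Set (Subgroup Γ) := {K | K.Normal ∧ (K : Set Γ) ⊆ s}
  have hchain : ∀ c ⊆ P, IsChain (· ≤ ·) c → ∀ K ∈ c, ∃ M ∈ P, ∀ K' ∈ c, K' ≤ M := by
    intro c hcP hc K hK
    refine ⟨sSup c, ⟨sSup_normal c fun K' hK' => (hcP hK').1, fun x hx => ?_⟩,
      fun K' => le_sSup⟩
    obtain ⟨K', hK', hxK'⟩ := (mem_sSup_of_directedOn ⟨K, hK⟩ hc.directedOn).1 hx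
    exact (hcP hK').2 hxK'
  obtain ⟨M, -, hM⟩ := zorn_le_nonempty₀ P hchain ⊥
    ⟨normal_bot, by simpa using h1⟩
  have : M.Normal := hM.prop.1
  have hstep : M.upperCentralSeriesStep ≤ M :=
    hM.le_of_ge ⟨inferInstance, hs M hM.prop.2⟩ fun x hx y =>
      commutator_le_left M ⊤ (commutator_mem_commutator hx (mem_top y))
  rw [hΓ.eq_top_of_upperCentralSeriesStep_le M hstep] at hM
  exact hM.prop.2 (mem_top g)

theorem mem_upperCentralSeriesStep_of_closure_eq_top {N : Subgroup Γ} [hN : N.Normal]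
    {X : Set Γ} (hX : closure X = ⊤) {w : Γ} (hw : ∀ x ∈ X, ⁅w, x⁆ ∈ N) :
    w ∈ N.upperCentralSeriesStep := by
  intro y
  induction (hX ▸ mem_top y : y ∈ closure X) using closure_induction with
  | mem x hx => exact hw x hx
  | one => simp
  | mul y z _ _ hy hz =>
    have : ⁅w, y * z⁆ = ⁅w, y⁆ * (y * ⁅w, z⁆ * y⁻¹) := by
      simp only [commutatorElement_def]; group
    exact this ▸ N.mul_mem hy (hN.conj_mem _ hz y)
  | inv y _ hy =>
    have : ⁅w, y⁻¹⁆ = y⁻¹ * ⁅w, y⁆⁻¹ * y⁻¹⁻¹ := by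
      simp only [commutatorElement_def]; group
    exact this ▸ hN.conj_mem _ (N.inv_mem hy) y⁻¹

def commutatorDepthLE (X : Set Γ) : ℕ → Set Γ
  | 0 => {1}
  | n + 1 => {w | ∀ x ∈ X, ⁅w, x⁆ ∈ commutatorDepthLE X n}

theorem one_mem_commutatorDepthLE (X : Set Γ) : ∀ n, (1 : Γ) ∈ commutatorDepthLE X n
  | 0 => rfl
  | n + 1 => fun x _ => by simpa using one_mem_commutatorDepthLE X n

theorem commutatorDepthLE_mono (X : Set Γ) : Monotone (commutatorDepthLE X) := by
  refine monotone_nat_of_le_succ fun n => ?_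
  induction n with
  | zero => rintro w rfl x _; simpa using one_mem_commutatorDepthLE X 0
  | succ n ih => exact fun w hw x hx => ih (hw x hx)

theorem mem_commutatorDepthLE_of_map {Γ' : Type*} [Group Γ'] {f : Γ' →* Γ}
    (hf : Function.Injective f) {X : Set Γ'} {w : Γ'} :
    ∀ {n}, f w ∈ commutatorDepthLE (f '' X) n → w ∈ commutatorDepthLE X n
  | 0, h => hf (h.trans f.map_one.symm)
  | n + 1, h => fun x hx => mem_commutatorDepthLE_of_map hf <| by
      simpa [map_commutatorElement] using h (f x) ⟨x, hx, rfl⟩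

theorem IsHypercentral.eventually_mem_commutatorDepthLE (hΓ : IsHypercentral Γ) {X : Set Γ}
    (hX : X.Finite) (w : Γ) : ∀ᶠ n in atTop, w ∈ commutatorDepthLE X n := by
  refine hΓ.induction (s := {w | ∀ᶠ n in atTop, w ∈ commutatorDepthLE X n})
    (Eventually.of_forall (one_mem_commutatorDepthLE X)) (fun K _ hK x hx => ?_) w
  obtain ⟨n, hn⟩ := (hX.eventually_all.2 fun y _ => hK (hx y)).exists
  have hxn : x ∈ commutatorDepthLE X (n + 1) := hn
  exact eventually_atTop.2 ⟨n + 1, fun m hm => commutatorDepthLE_mono X hm hxn⟩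

theorem isAscendingCentralSeries_normalClosure_commutatorDepthLE {X : Set Γ}
    (hX : closure X = ⊤) :
    Subgroup.IsAscendingCentralSeries fun n => normalClosure (commutatorDepthLE X n) := by
  refine ⟨normalClosure_eq_bot_iff.2 subset_rfl, fun w n hw => ?_⟩
  have hstep : normalClosure (commutatorDepthLE X (n + 1)) ≤
      (normalClosure (commutatorDepthLE X n)).upperCentralSeriesStep :=
    normalClosure_le_normal fun v hv =>
      mem_upperCentralSeriesStep_of_closure_eq_top hX fun x hx => subset_normalClosure (hv x hx)
  exact hstep hw

theorem isNilpotent_of_subset_commutatorDepthLE {X : Set Γ} (hX : closure X = ⊤) {n : ℕ}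
    (hn : X ⊆ commutatorDepthLE X n) : IsNilpotent Γ :=
  (Subgroup.nilpotent_iff_finite_ascending_central_series Γ).2
    ⟨n, _, isAscendingCentralSeries_normalClosure_commutatorDepthLE hX,
      top_le_iff.1 (hX ▸ closure_le_normalClosure.trans (normalClosure_mono hn))⟩

theorem IsHypercentral.isNilpotent_of_injective {Γ' : Type*} [Group Γ'] [FG Γ']
    (hΓ : IsHypercentral Γ) {f : Γ' →* Γ} (hf : Function.Injective f) : IsNilpotent Γ' := by
  obtain ⟨X, hX, hXfin⟩ := fg_iff.1 ‹FG Γ'›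
  obtain ⟨n, hn⟩ := (hXfin.eventually_all.2 fun x _ =>
    hΓ.eventually_mem_commutatorDepthLE (hXfin.image f) (f x)).exists
  exact isNilpotent_of_subset_commutatorDepthLE hX fun x hx =>
    mem_commutatorDepthLE_of_map hf (hn x hx)

end Group

/-- In a hypercentral-by-finite group, every finitely generated subgroup is
nilpotent-by-finite. -/
theorem fg_subgroup_nilpotent_by_finite_of_hypercentral_by_finite
    (G : Type*) [Group G] (H : Subgroup G) [H.Normal] [H.FiniteIndex]
    (hhyp : ∀ (K : Subgroup H) [K.Normal], K ≠ ⊤ → Nontrivial (Subgroup.center (H ⧸ K)))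
    (F : Subgroup G) [Group.FG F] :
    ∃ N : Subgroup F, N.Normal ∧ N.FiniteIndex ∧ Group.IsNilpotent N := by
  let ι : H.subgroupOf F →* H :=
    (F.subtype.comp (H.subgroupOf F).subtype).codRestrict H fun x => x.2
  have hι : Function.Injective ι := fun x y hxy =>
    Subtype.ext (Subtype.ext (congrArg Subtype.val hxy :))
  exact ⟨H.subgroupOf F, inferInstance, inferInstance,
    Group.IsHypercentral.isNilpotent_of_injective hhyp hι⟩
end

section
/- Let $F$ be a group and $t$ a natural number such that $\gamma_{t+1}(F)$ (that is, `lowerCentralSeries F t`) is finite. Then the lower central series of $F$ stabilizes at a finite term: there exists a natural number $m \geq t$ such that `lowerCentralSeries F (m+1) = lowerCentralSeries F m`, the subgroup $L =$ `lowerCentralSeries F m` is finite, and the quotient group $F/L$ is nilpotent. -/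
/-!
Below a finite term the lower central series is a descending chain of finite groups, so it
becomes stationary at some `L = γ_{m+1}(F)`, which is still finite. For every `n` the quotient
`F ⧸ γ_{n+1}(F)` is nilpotent, since `γ_{n+1}` of the quotient is the image of `γ_{n+1}(F)`.
-/

namespace Subgroup

variable {G : Type*} [Group G]

theorem finite_of_le {H K : Subgroup G} [Finite K] (hle : H ≤ K) : Finite H :=
  Finite.Set.subset (K : Set G) hle

theorem exists_succ_eq_of_antitone_of_finite {H : ℕ → Subgroup G} (hH : Antitone H) {t : ℕ}
    (ht : Finite (H t)) : ∃ m, t ≤ m ∧ H (m + 1) = H m := by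
  have hfin : ∀ n, Finite (H (t + n)) := fun n => finite_of_le (hH (Nat.le_add_right t n))
  -- `H (t + k)` has minimal order among the terms from `t` on, so the next term cannot be smaller.
  set k := Function.argmin fun n => Nat.card (H (t + n))
  refine ⟨t + k, Nat.le_add_right t k, eq_of_le_of_card_ge (hH (Nat.le_succ _)) ?_⟩
  exact Function.argmin_le (fun n => Nat.card (H (t + n))) (k + 1)

theorem map_top_lowerCentralSeries_of_surjective {K : Type*} [Group K] {f : G →* K}
    (hf : Function.Surjective f) (n : ℕ) :
    ((⊤ : Subgroup G).lowerCentralSeries n).map f = (⊤ : Subgroup K).lowerCentralSeries n := by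
  rw [map_lowerCentralSeries, map_top_of_surjective f hf]

theorem isNilpotent_quotient_lowerCentralSeries (n : ℕ) :
    Group.IsNilpotent (G ⧸ (⊤ : Subgroup G).lowerCentralSeries n) := by
  rw [nilpotent_iff_lowerCentralSeries]
  refine ⟨n, ?_⟩
  rw [← map_top_lowerCentralSeries_of_surjective (QuotientGroup.mk'_surjective _),
    map_eq_bot_iff, QuotientGroup.ker_mk']

end Subgroup

/-- If `γ_{t+1}(F)` is finite, then the lower central series of `F` stabilizes
at a finite term `L = γ_{m+1}(F)` with `F ⧸ L` nilpotent. -/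
theorem lowerCentralSeries_stabilizes_of_finite
    (F : Type*) [Group F] (t : ℕ) (h : Finite ((⊤ : Subgroup F).lowerCentralSeries t)) :
    ∃ m : ℕ, t ≤ m ∧ (⊤ : Subgroup F).lowerCentralSeries (m + 1) = (⊤ : Subgroup F).lowerCentralSeries m ∧
      Finite ((⊤ : Subgroup F).lowerCentralSeries m) ∧
      Group.IsNilpotent (F ⧸ (⊤ : Subgroup F).lowerCentralSeries m) := by
  obtain ⟨m, htm, hstable⟩ :=
    Subgroup.exists_succ_eq_of_antitone_of_finite (Subgroup.lowerCentralSeries_antitone ⊤) h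
  exact ⟨m, htm, hstable, Subgroup.finite_of_le (Subgroup.lowerCentralSeries_antitone ⊤ htm),
    Subgroup.isNilpotent_quotient_lowerCentralSeries m⟩
end

section
/- Let $G$ be a group such that every finitely generated subgroup of $G$ is nilpotent (i.e. $G$ is locally nilpotent), and suppose $G$ has a normal subgroup $H$ of finite index such that for every normal subgroup $K$ of $H$ with $K \neq H$, the center of $H/K$ is nontrivial (i.e. $H$ is hypercentral). Then $G$ itself is hypercentral: for every normal subgroup $N$ of $G$ with $N \neq G$, the center of the quotient group $G/N$ is nontrivial. -/
/-!
Pass to `Q = G ⧸ N` and let `M` be the image of `H`, a normal subgroup of finite index. Some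
`z ≠ 1` centralizes `M`: a nontrivial central element of `M ≅ H ⧸ (H ⊓ N)`, or any `z ≠ 1` when
`M` is trivial. Since `z` centralizes `M`, its conjugates are indexed by `Q ⧸ M`; so they are
finitely many, and together with a transversal of `M` they generate a nilpotent subgroup `F`.
The normal closure of `z` is a nontrivial normal subgroup of `F`, hence meets `Z(F)` in some
`w ≠ 1`. This `w` centralizes `M` (as `z` does, and `M` is normal) and the transversal, so it
is central in `Q`.
-/

open Subgroup QuotientGroup
open scoped commutatorElement

namespace Subgroup

variable {G : Type*} [Group G]

theorem inf_upperCentralSeries_eq_bot_of_inf_center_eq_bot {B : Subgroup G} [B.Normal]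
    (hB : B ⊓ center G = ⊥) (n : ℕ) : B ⊓ upperCentralSeries G n = ⊥ := by
  induction n with
  | zero => simp
  | succ n ih =>
    refine eq_bot_iff.mpr fun x hx => hB ▸ ⟨hx.1, mem_center_iff.mpr fun y => ?_⟩
    have hxy : ⁅x, y⁆ ∈ B ⊓ upperCentralSeries G n :=
      ⟨commutator_le_left B ⊤ (commutator_mem_commutator hx.1 (mem_top y)),
        mem_upperCentralSeries_succ_iff.mp hx.2 y⟩
    rw [ih, mem_bot, commutatorElement_eq_one_iff_mul_comm] at hxy
    exact hxy.symm

theorem Normal.inf_center_ne_bot [Group.IsNilpotent G] {B : Subgroup G} [B.Normal]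
    (hB : B ≠ ⊥) : B ⊓ center G ≠ ⊥ := fun h => hB <| by
  simpa [upperCentralSeries_nilpotencyClass] using
    inf_upperCentralSeries_eq_bot_of_inf_center_eq_bot h (Group.nilpotencyClass G)

theorem FiniteIndex.map_of_surjective {G' : Type*} [Group G'] {f : G →* G'}
    (hf : Function.Surjective f) (H : Subgroup G) [H.FiniteIndex] : (H.map f).FiniteIndex :=
  ⟨fun h => FiniteIndex.index_ne_zero (Nat.eq_zero_of_zero_dvd (h ▸ H.index_map_dvd hf))⟩

variable {M : Subgroup G} {z : G}

theorem conj_out_mk_eq (hz : z ∈ centralizer M) (g : G) :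
    (g : G ⧸ M).out * z * (g : G ⧸ M).out⁻¹ = g * z * g⁻¹ := by
  obtain ⟨⟨h, hM⟩, hh⟩ := mk_out_eq_mul M g
  have hcomm : h * z = z * h := mem_centralizer_iff.mp hz h hM
  rw [hh]
  calc g * h * z * (g * h)⁻¹ = g * (h * z) * h⁻¹ * g⁻¹ := by group
    _ = g * z * g⁻¹ := by rw [hcomm]; group

theorem finite_conjugatesOf [M.FiniteIndex] (hz : z ∈ centralizer M) :
    (conjugatesOf z).Finite :=
  (Set.finite_range fun q : G ⧸ M => q.out * z * q.out⁻¹).subset fun _ hx =>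
    let ⟨g, hg⟩ := isConj_iff.mp hx
    ⟨g, (conj_out_mk_eq hz g).trans hg⟩

theorem mem_center_of_commute_out {w : G} (hw : w ∈ centralizer M)
    (hout : ∀ q : G ⧸ M, Commute q.out w) : w ∈ center G := by
  refine mem_center_iff.mpr fun g => ?_
  obtain ⟨⟨h, hM⟩, hh⟩ := mk_out_eq_mul M g
  have hg : g = (g : G ⧸ M).out * h⁻¹ := by rw [hh]; group
  rw [hg]
  exact (hout _).mul_left (mem_centralizer_iff.mp hw _ (M.inv_mem hM))

end Subgroup

def Group.IsLocallyNilpotent (G : Type*) [Group G] : Prop :=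
  ∀ F : Subgroup G, Group.FG F → Group.IsNilpotent F

namespace Group.IsLocallyNilpotent

variable {G : Type*} [Group G]

theorem of_surjective {G' : Type*} [Group G'] (hG : IsLocallyNilpotent G) (f : G →* G')
    (hf : Function.Surjective f) : IsLocallyNilpotent G' := by
  intro F hF
  obtain ⟨S, hSF, hS⟩ := (Subgroup.fg_iff F).mp ((fg_iff_subgroup_fg F).mp hF)
  have : Finite (Function.surjInv hf '' S) := (hS.image _).to_subtype
  have hmap : (closure (Function.surjInv hf '' S)).map f = F := by
    rw [MonoidHom.map_closure, Set.image_image]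
    simp [Function.surjInv_eq hf, hSF]
  have := hG (closure (Function.surjInv hf '' S)) inferInstance
  exact hmap ▸ nilpotent_of_surjective _ (f.subgroupMap_surjective _)

theorem center_ne_bot_of_mem_centralizer (hG : IsLocallyNilpotent G) (M : Subgroup G)
    [M.Normal] [M.FiniteIndex] {z : G} (hzM : z ∈ centralizer M) (hz : z ≠ 1) :
    center G ≠ ⊥ := by
  set S := conjugatesOf z ∪ Set.range fun q : G ⧸ M => q.out
  have : Finite S := ((finite_conjugatesOf hzM).union (Set.finite_range _)).to_subtype
  have : IsNilpotent (closure S) := hG _ inferInstance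
  set A := normalClosure ({z} : Set G)
  have hAS : A ≤ closure S := closure_mono <| by simp [S, conjugatesOfSet]
  have hAM : A ≤ centralizer M := normalClosure_le_normal (by simpa using hzM)
  have hzA : z ∈ A := subset_normalClosure rfl
  have hA : A.subgroupOf (closure S) ≠ ⊥ :=
    ne_bot_iff_exists_ne_one.mpr ⟨⟨⟨z, hAS hzA⟩, hzA⟩, fun h =>
      hz (Subtype.ext_iff.mp (Subtype.ext_iff.mp h))⟩
  obtain ⟨⟨w, hwA, hwF⟩, hw⟩ := ne_bot_iff_exists_ne_one.mp (Normal.inf_center_ne_bot hA)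
  have hwG : (w : G) ∈ center G := mem_center_of_commute_out (hAM hwA) fun q =>
    Subtype.ext_iff.mp (mem_center_iff.mp hwF ⟨q.out, subset_closure (Or.inr ⟨q, rfl⟩)⟩)
  exact ne_bot_iff_exists_ne_one.mpr
    ⟨⟨w, hwG⟩, fun h => hw (Subtype.ext (Subtype.ext (congrArg Subtype.val h :)))⟩

end Group.IsLocallyNilpotent

theorem MonoidHom.exists_ne_one_mem_centralizer_range {H Q : Type*} [Group H] [Group Q]
    (f : H →* Q) [Nontrivial (center (H ⧸ f.ker))] :
    ∃ z ∈ centralizer (f.range : Set Q), z ≠ 1 := by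
  obtain ⟨ζ, hζ⟩ := exists_ne (1 : center (H ⧸ f.ker))
  refine ⟨kerLift f ζ, ?_, ?_⟩
  · rintro _ ⟨h, rfl⟩
    rw [← kerLift_mk, ← map_mul, ← map_mul, mem_center_iff.mp ζ.2]
  · rw [Ne, ← map_one (kerLift f), (kerLift_injective f).eq_iff]
    exact fun h => hζ (Subtype.ext h)

/-- A locally nilpotent, hypercentral-by-finite group is hypercentral. -/
theorem hypercentral_of_locally_nilpotent_of_hypercentral_by_finite
    (G : Type*) [Group G]
    (hloc : ∀ F : Subgroup G, Group.FG F → Group.IsNilpotent F)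
    (H : Subgroup G) [H.Normal] [H.FiniteIndex]
    (hhyp : ∀ (K : Subgroup H) [K.Normal], K ≠ ⊤ → Nontrivial (Subgroup.center (H ⧸ K))) :
    ∀ (N : Subgroup G) [N.Normal], N ≠ ⊤ → Nontrivial (Subgroup.center (G ⧸ N)) := by
  intro N _ hN
  have hQ : Group.IsLocallyNilpotent (G ⧸ N) :=
    Group.IsLocallyNilpotent.of_surjective hloc _ (mk'_surjective N)
  have := FiniteIndex.map_of_surjective (mk'_surjective N) H
  set f := (mk' N).domRestrict H
  obtain ⟨z, hzM, hz⟩ : ∃ z ∈ centralizer (f.range : Set (G ⧸ N)), z ≠ 1 := by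
    by_cases hf : f.range = ⊥
    · have := QuotientGroup.nontrivial_iff.mpr hN
      obtain ⟨z, hz⟩ := exists_ne (1 : G ⧸ N)
      exact ⟨z, by simp [hf, mem_centralizer_iff], hz⟩
    · have := hhyp f.ker (by rwa [Ne, MonoidHom.ker_eq_top_iff, ← MonoidHom.range_eq_bot_iff])
      exact f.exists_ne_one_mem_centralizer_range
  rw [MonoidHom.domRestrict_range] at hzM
  exact (nontrivial_iff_ne_bot _).mpr (hQ.center_ne_bot_of_mem_centralizer _ hzM hz)
end

section
/- Let $G$ be a group, $Z$ a normal subgroup of $G$, and $F$ a subgroup of $G$ with $Z \sqcup F = G$ (so $G = ZF$, since $Z$ is normal). If the center of the quotient group $G/Z$ is trivial, then for every natural number $n$ the image in $G$ of the $n$-th term `upperCentralSeries F n` of the upper central series of $F$ is contained in $Z$. -/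
/-! Let `φ : F →* G ⧸ Z` be the restriction of the quotient map, which is onto because
`G = ZF`. A surjection maps the upper central series of its source into that of its target,
and a group with trivial center has trivial upper central series, so each term of the
upper central series of `F` lies in `ker φ = F ∩ Z`. -/

namespace Subgroup

theorem upperCentralSeries_eq_bot_of_center_eq_bot {Q : Type*} [Group Q]
    (hQ : center Q = ⊥) (n : ℕ) : upperCentralSeries Q n = ⊥ := by
  have h01 : upperCentralSeries Q 0 = upperCentralSeries Q (0 + 1) := by
    rw [upperCentralSeries_one, hQ, upperCentralSeries_zero]
  exact (upperCentralSeries.eq_ge_of_eq_succ n.zero_le h01).symm.trans (upperCentralSeries_zero Q)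

theorem upperCentralSeries_le_ker_of_center_eq_bot {H Q : Type*} [Group H] [Group Q]
    {φ : H →* Q} (hφ : Function.Surjective φ) (hQ : center Q = ⊥) (n : ℕ) :
    upperCentralSeries H n ≤ φ.ker := by
  rw [← map_eq_bot_iff, ← le_bot_iff, ← upperCentralSeries_eq_bot_of_center_eq_bot hQ n]
  exact upperCentralSeries.map hφ n

end Subgroup

theorem QuotientGroup.mk'_comp_subtype_surjective {G : Type*} [Group G] {Z F : Subgroup G}
    [Z.Normal] (hZF : Z ⊔ F = ⊤) :
    Function.Surjective ((QuotientGroup.mk' Z).comp F.subtype) := by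
  intro q
  obtain ⟨g, rfl⟩ := QuotientGroup.mk'_surjective Z q
  have hg : g ∈ Z ⊔ F := hZF ▸ Subgroup.mem_top g
  obtain ⟨z, hz, f, hf, rfl⟩ := Subgroup.mem_sup_of_normal_left.mp hg
  refine ⟨⟨f, hf⟩, ?_⟩
  simp [(QuotientGroup.eq_one_iff z).mpr hz]

/-- If `Z ⊔ F = G` with `Z` normal and the center of `G ⧸ Z` is trivial, then
the image in `G` of every term of the upper central series of `F` lies in `Z`. -/
theorem map_upperCentralSeries_le_of_center_quotient_bot
    (G : Type*) [Group G] (Z : Subgroup G) [Z.Normal] (F : Subgroup G)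
    (hZF : Z ⊔ F = ⊤) (hc : Subgroup.center (G ⧸ Z) = ⊥) :
    ∀ n : ℕ, Subgroup.map F.subtype (upperCentralSeries F n) ≤ Z := by
  intro n
  rw [Subgroup.map_le_iff_le_comap, ← QuotientGroup.ker_mk' Z, MonoidHom.comap_ker]
  exact Subgroup.upperCentralSeries_le_ker_of_center_eq_bot
    (QuotientGroup.mk'_comp_subtype_surjective hZF) hc n
end
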